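/- Let β > 0. For j, n ∈ ℕ define p_{jn}(t) = e^{−βt}·p̃_{jn}(t) + β·∫_0^t e^{−βτ} p̃_{0n}(τ) dτ (t ≥ 0). Then: p_{jn}(0) = δ_{jn}; ∑_{n≥0} p_{jn}(t) = 1 for all t ≥ 0; and the functions p_{jn} satisfy the forward equations of the M^X/M/c queue with resurrection and catastrophe rate β, namely p′_{j0}(t) = −(h+β) p_{j0}(t) + b_0 p_{j1}(t) + β; for 1 ≤ n ≤ c−1: p′_{jn}(t) = h_n p_{j0}(t) + ∑_{k=1}^{n−1} b_{n−k+1} p_{jk}(t) + (b_1 − (n−1) b_0 − β) p_{jn}(t) + (n+1) b_0 p_{j,n+1}(t); and for n ≥ c: p′_{jn}(t) = h_n p_{j0}(t) + ∑_{k=1}^{n−1} b_{n−k+1} p_{jk}(t) + (b_1 − (c−1) b_0 − β) p_{jn}(t) + c b_0 p_{j,n+1}(t). -/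

import Mathlib

/-!
Differentiating `e^{-βt} p̃_{jn}(t)` gives `e^{-βt}` times the old right-hand side minus
`β e^{-βt} p̃_{jn}(t)`, and the integral term contributes `β e^{-βt} p̃_{0n}(t)`. Integrating the
equation for `p̃_{0n}` against `e^{-βτ}` by parts expresses `e^{-βt} p̃_{0n}(t)` as the old
right-hand side evaluated at the integrals `∫₀ᵗ e^{-βτ} p̃_{0k}`, plus
`δ_{0n} - β ∫₀ᵗ e^{-βτ} p̃_{0n}`. Since each row of the forward equations is a finite linear
combination, the terms reassemble into the old right-hand side at `p_{j·}(t)`, minus `β p_{jn}(t)`,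
plus `β δ_{0n}`. For the normalisation, the sum over `n` passes under the integral by dominated
convergence (all terms are nonnegative), leaving `e^{-βt} + β ∫₀ᵗ e^{-βτ} dτ = 1`.
-/

open Set Filter Topology

/-- The transition function of the queue with catastrophe rate `β`, built from the
transition function `pt` of the queue without catastrophes:
`p_{jn}(t) = e^{-βt} p̃_{jn}(t) + β ∫_0^t e^{-βτ} p̃_{0n}(τ) dτ`. -/
noncomputable def pCat (β : ℝ) (pt : ℕ → ℕ → ℝ → ℝ) (j n : ℕ) (t : ℝ) : ℝ :=
  Real.exp (-β * t) * pt j n t + β * ∫ τ in (0 : ℝ)..t, Real.exp (-β * τ) * pt 0 n τ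

open MeasureTheory intervalIntegral
open scoped Interval

theorem hasDerivWithinAt_integral_Ici {E : Type*} [NormedAddCommGroup E] [NormedSpace ℝ E]
    [CompleteSpace E] {f : ℝ → E} {a t : ℝ} (hf : ContinuousOn f (Ici a)) (ht : a ≤ t) :
    HasDerivWithinAt (fun u => ∫ τ in a..u, f τ) (f t) (Ici a) t := by
  -- extend `f` continuously to the left of `a` to use the FTC on all of `ℝ`
  set g : ℝ → E := fun τ => f (max τ a)
  have hg : Continuous g :=
    hf.comp_continuous (continuous_id.max continuous_const) fun τ => le_max_right τ a
  have hfg : ∀ u ∈ Ici a, ∫ τ in a..u, f τ = ∫ τ in a..u, g τ := fun u hu =>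
    integral_congr fun τ hτ => by
      rw [uIcc_of_le hu] at hτ
      simp only [g, max_eq_left hτ.1]
  have := (hg.integral_hasStrictDerivAt a t).hasDerivAt.hasDerivWithinAt.congr hfg (hfg t ht)
  simpa only [g, max_eq_left ht] using this

theorem hasSum_intervalIntegral_of_nonneg {ι : Type*} [Countable ι] {f : ι → ℝ → ℝ}
    {g : ℝ → ℝ} {a b : ℝ} (hf : ∀ i, AEStronglyMeasurable (f i) (volume.restrict (Ι a b)))
    (hf_nonneg : ∀ i, ∀ x ∈ Ι a b, 0 ≤ f i x) (hfg : ∀ x ∈ Ι a b, HasSum (fun i => f i x) (g x))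
    (hg : IntervalIntegrable g volume a b) :
    HasSum (fun i => ∫ x in a..b, f i x) (∫ x in a..b, g x) := by
  refine hasSum_integral_of_dominated_convergence f hf
    (fun i => ae_of_all _ fun x hx => (Real.norm_of_nonneg (hf_nonneg i x hx)).le)
    (ae_of_all _ fun x hx => (hfg x hx).summable) ?_ (ae_of_all _ hfg)
  rw [intervalIntegrable_iff] at hg ⊢
  exact hg.congr_fun (fun x hx => ((hfg x hx).tsum_eq).symm) measurableSet_uIoc

theorem hasDerivAt_exp_neg_mul (β x : ℝ) :
    HasDerivAt (fun τ => Real.exp (-β * τ)) (-β * Real.exp (-β * x)) x :=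
  (((hasDerivAt_id' x).const_mul (-β)).exp).congr_deriv (by ring)

theorem mul_integral_exp_neg_mul (β t : ℝ) :
    β * ∫ τ in (0 : ℝ)..t, Real.exp (-β * τ) = 1 - Real.exp (-β * t) := by
  have hderiv : ∀ x : ℝ, HasDerivAt (fun τ => -Real.exp (-β * τ)) (β * Real.exp (-β * x)) x :=
    fun x => (hasDerivAt_exp_neg_mul β x).fun_neg.congr_deriv (by ring)
  rw [← intervalIntegral.integral_const_mul, integral_eq_sub_of_hasDerivAt (fun x _ => hderiv x)
    ((by fun_prop : Continuous fun x => β * Real.exp (-β * x)).intervalIntegrable _ _)]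
  simp only [mul_zero, Real.exp_zero]
  ring

theorem integral_exp_neg_mul_mul_deriv (β : ℝ) {f f' : ℝ → ℝ} {a b : ℝ} (hab : a ≤ b)
    (hf : ∀ x ∈ Icc a b, HasDerivWithinAt f (f' x) (Ici a) x)
    (hf' : IntervalIntegrable f' volume a b) :
    ∫ τ in a..b, Real.exp (-β * τ) * f' τ =
      Real.exp (-β * b) * f b - Real.exp (-β * a) * f a +
        β * ∫ τ in a..b, Real.exp (-β * τ) * f τ := by
  have hexp_cont : Continuous fun τ : ℝ => Real.exp (-β * τ) := by fun_prop
  have hf_cont : ContinuousOn f (Icc a b) := fun x hx =>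
    (hf x hx).continuousWithinAt.mono Icc_subset_Ici_self
  have hexpf : IntervalIntegrable (fun τ => Real.exp (-β * τ) * f τ) volume a b :=
    (hexp_cont.continuousOn.mul hf_cont).intervalIntegrable_of_Icc hab
  have hexpf' : IntervalIntegrable (fun τ => Real.exp (-β * τ) * f' τ) volume a b :=
    hf'.continuousOn_mul hexp_cont.continuousOn
  have hFTC := integral_eq_sub_of_hasDeriv_right_of_le (f := fun τ => Real.exp (-β * τ) * f τ) hab
    (hexp_cont.continuousOn.mul hf_cont)
    (fun x hx => (((hasDerivAt_exp_neg_mul β x).hasDerivWithinAt.fun_mul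
      (hf x (Ioo_subset_Icc_self hx))).mono fun y hy => hx.1.le.trans hy.le).congr_deriv
        (by ring))
    ((hexpf.const_mul (-β)).add hexpf')
  rw [integral_add (hexpf.const_mul (-β)) hexpf', intervalIntegral.integral_const_mul] at hFTC
  linarith

theorem pCat_zero (β : ℝ) (pt : ℕ → ℕ → ℝ → ℝ) (j n : ℕ) : pCat β pt j n 0 = pt j n 0 := by
  simp [pCat]

section Catastrophe

variable {β : ℝ} {pt : ℕ → ℕ → ℝ → ℝ}

theorem hasSum_pCat (hptnn : ∀ j n t, 0 ≤ t → 0 ≤ pt j n t)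
    (hptcont : ∀ j n, ContinuousOn (pt j n) (Ici 0))
    (hptsum : ∀ j t, 0 ≤ t → HasSum (fun n => pt j n t) 1) (j : ℕ) {t : ℝ} (ht : 0 ≤ t) :
    HasSum (fun n => pCat β pt j n t) 1 := by
  have hexp_cont : Continuous fun τ : ℝ => Real.exp (-β * τ) := by fun_prop
  have hint : HasSum (fun n => ∫ τ in (0 : ℝ)..t, Real.exp (-β * τ) * pt 0 n τ)
      (∫ τ in (0 : ℝ)..t, Real.exp (-β * τ)) := by
    refine hasSum_intervalIntegral_of_nonneg (fun n => ?_) (fun n τ hτ => ?_) (fun τ hτ => ?_)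
      (hexp_cont.intervalIntegrable _ _)
    · rw [uIoc_of_le ht]
      exact (hexp_cont.continuousOn.mul ((hptcont 0 n).mono fun τ hτ => hτ.1.le))
        |>.aestronglyMeasurable measurableSet_Ioc
    · rw [uIoc_of_le ht] at hτ
      exact mul_nonneg (Real.exp_nonneg _) (hptnn 0 n τ hτ.1.le)
    · rw [uIoc_of_le ht] at hτ
      simpa using (hptsum 0 τ hτ.1.le).mul_left (Real.exp (-β * τ))
  have h := ((hptsum j t ht).mul_left (Real.exp (-β * t))).add (hint.mul_left β)
  rwa [mul_integral_exp_neg_mul, mul_one, add_sub_cancel] at h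

theorem hasDerivWithinAt_pCat (hptcont : ∀ j n, ContinuousOn (pt j n) (Ici 0)) {n : ℕ}
    (F : Finset ℕ) (a : ℕ → ℝ)
    (hpt' : ∀ j t, 0 ≤ t → HasDerivWithinAt (pt j n) (∑ k ∈ F, a k * pt j k t) (Ici 0) t)
    (j : ℕ) {t : ℝ} (ht : 0 ≤ t) :
    HasDerivWithinAt (pCat β pt j n)
      (∑ k ∈ F, a k * pCat β pt j k t - β * pCat β pt j n t + β * pt 0 n 0) (Ici 0) t := by
  set I : ℕ → ℝ := fun k => ∫ τ in (0 : ℝ)..t, Real.exp (-β * τ) * pt 0 k τ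
  have hexp_cont : Continuous fun τ : ℝ => Real.exp (-β * τ) := by fun_prop
  have hint : ∀ k, IntervalIntegrable (fun τ => Real.exp (-β * τ) * pt 0 k τ) volume 0 t :=
    fun k => (hexp_cont.continuousOn.mul ((hptcont 0 k).mono Icc_subset_Ici_self))
      |>.intervalIntegrable_of_Icc ht
  -- integrate the equation of row `(0, n)` against `e^{-βτ}` by parts
  have hparts : ∑ k ∈ F, a k * I k = Real.exp (-β * t) * pt 0 n t - pt 0 n 0 + β * I n := by
    have hrow_int : IntervalIntegrable (fun τ => ∑ k ∈ F, a k * pt 0 k τ) volume 0 t :=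
      (continuousOn_finsetSum F fun k _ => continuousOn_const.mul
        ((hptcont 0 k).mono Icc_subset_Ici_self)).intervalIntegrable_of_Icc ht
    have h := integral_exp_neg_mul_mul_deriv β ht (fun x hx => hpt' 0 x hx.1) hrow_int
    simp only [mul_zero, Real.exp_zero, one_mul, Finset.mul_sum, mul_left_comm _ (a _)] at h
    rw [integral_finsetSum fun k _ => (hint k).const_mul (a k)] at h
    simpa only [intervalIntegral.integral_const_mul] using h
  have hderiv : HasDerivWithinAt (pCat β pt j n)
      (-β * Real.exp (-β * t) * pt j n t + Real.exp (-β * t) * ∑ k ∈ F, a k * pt j k t +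
        β * (Real.exp (-β * t) * pt 0 n t)) (Ici 0) t :=
    ((hasDerivAt_exp_neg_mul β t).hasDerivWithinAt.fun_mul (hpt' j t ht)).fun_add
      ((hasDerivWithinAt_integral_Ici (f := fun τ => Real.exp (-β * τ) * pt 0 n τ)
        (hexp_cont.continuousOn.mul (hptcont 0 n)) ht).const_mul β)
  refine hderiv.congr_deriv ?_
  have hsum : ∑ k ∈ F, a k * pCat β pt j k t =
      Real.exp (-β * t) * ∑ k ∈ F, a k * pt j k t + β * ∑ k ∈ F, a k * I k := by
    simp only [pCat, I, mul_add, Finset.sum_add_distrib, Finset.mul_sum, mul_left_comm _ (a _)]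
  rw [hsum, hparts]
  simp only [pCat, I]
  ring

theorem hasDerivWithinAt_pCat_zero (hptcont : ∀ j n, ContinuousOn (pt j n) (Ici 0)) (A D : ℝ)
    (hpt' : ∀ j t, 0 ≤ t →
      HasDerivWithinAt (pt j 0) (-A * pt j 0 t + D * pt j 1 t) (Ici 0) t)
    (j : ℕ) {t : ℝ} (ht : 0 ≤ t) :
    HasDerivWithinAt (pCat β pt j 0)
      (-(A + β) * pCat β pt j 0 t + D * pCat β pt j 1 t + β * pt 0 0 0) (Ici 0) t := by
  have hcomb : ∀ q : ℕ → ℝ,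
      ∑ k ∈ {0, 1}, (if k = 0 then -A else D) * q k = -A * q 0 + D * q 1 := fun q => by
    simp
  have h := hasDerivWithinAt_pCat (β := β) hptcont {0, 1} (fun k => if k = 0 then -A else D)
    (fun j t ht => by rw [hcomb fun k => pt j k t]; exact hpt' j t ht) j ht
  rw [hcomb] at h
  exact h.congr_deriv (by ring)

theorem hasDerivWithinAt_pCat_of_pos (hptcont : ∀ j n, ContinuousOn (pt j n) (Ici 0)) {n : ℕ}
    (hn : 1 ≤ n) (b : ℕ → ℝ) (A C D : ℝ)
    (hpt' : ∀ j t, 0 ≤ t → HasDerivWithinAt (pt j n)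
      (A * pt j 0 t + (∑ k ∈ Finset.Icc 1 (n - 1), b (n - k + 1) * pt j k t) +
        C * pt j n t + D * pt j (n + 1) t) (Ici 0) t)
    (j : ℕ) {t : ℝ} (ht : 0 ≤ t) :
    HasDerivWithinAt (pCat β pt j n)
      (A * pCat β pt j 0 t + (∑ k ∈ Finset.Icc 1 (n - 1), b (n - k + 1) * pCat β pt j k t) +
        (C - β) * pCat β pt j n t + D * pCat β pt j (n + 1) t + β * pt 0 n 0) (Ici 0) t := by
  set a : ℕ → ℝ := fun k =>
    if k = 0 then A else if k = n then C else if k = n + 1 then D else b (n - k + 1)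
  have hcomb : ∀ q : ℕ → ℝ,
      ∑ k ∈ insert 0 (insert n (insert (n + 1) (Finset.Icc 1 (n - 1)))), a k * q k =
        A * q 0 + (∑ k ∈ Finset.Icc 1 (n - 1), b (n - k + 1) * q k) + C * q n + D * q (n + 1) := by
    intro q
    have hIcc : ∀ k ∈ Finset.Icc 1 (n - 1), a k * q k = b (n - k + 1) * q k := fun k hk => by
      rw [Finset.mem_Icc] at hk
      simp only [a, if_neg (show k ≠ 0 by omega), if_neg (show k ≠ n by omega),
        if_neg (show k ≠ n + 1 by omega)]
    rw [Finset.sum_insert (by simp; omega), Finset.sum_insert (by simp; omega),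
      Finset.sum_insert (by simp), Finset.sum_congr rfl hIcc]
    simp only [a, if_neg (show n ≠ 0 by omega), if_neg (show n + 1 ≠ n by omega), if_true,
      if_neg (show n + 1 ≠ 0 by omega)]
    ring
  have h := hasDerivWithinAt_pCat (β := β) hptcont _ a
    (fun j t ht => by rw [hcomb fun k => pt j k t]; exact hpt' j t ht) j ht
  rw [hcomb] at h
  exact h.congr_deriv (by ring)

end Catastrophe

theorem stmt18_general (c : ℕ) (hc : 1 ≤ c) (b : ℕ → ℝ)
    (hh : ℕ → ℝ)
    (β : ℝ)
    (pt : ℕ → ℕ → ℝ → ℝ)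
    (hptnn : ∀ j n : ℕ, ∀ t : ℝ, 0 ≤ t → 0 ≤ pt j n t)
    (hptcont : ∀ j n : ℕ, ContinuousOn (pt j n) (Set.Ici 0))
    (hpt0 : ∀ j n : ℕ, pt j n 0 = if j = n then (1 : ℝ) else 0)
    (hptsum : ∀ j : ℕ, ∀ t : ℝ, 0 ≤ t → (∑' n : ℕ, pt j n t) = 1)
    (hpt'0 : ∀ j : ℕ, ∀ t : ℝ, 0 ≤ t →
      HasDerivWithinAt (pt j 0)
        (-(∑' j' : ℕ, hh (j' + 1)) * pt j 0 t + b 0 * pt j 1 t) (Set.Ici 0) t)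
    (hpt'mid : ∀ j n : ℕ, ∀ t : ℝ, 1 ≤ n → n ≤ c - 1 → 0 ≤ t →
      HasDerivWithinAt (pt j n)
        (hh n * pt j 0 t + (∑ k ∈ Finset.Icc 1 (n - 1), b (n - k + 1) * pt j k t) +
          (b 1 - ((n : ℝ) - 1) * b 0) * pt j n t +
          ((n : ℝ) + 1) * b 0 * pt j (n + 1) t) (Set.Ici 0) t)
    (hpt'tail : ∀ j n : ℕ, ∀ t : ℝ, c ≤ n → 0 ≤ t →
      HasDerivWithinAt (pt j n)
        (hh n * pt j 0 t + (∑ k ∈ Finset.Icc 1 (n - 1), b (n - k + 1) * pt j k t) +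
          (b 1 - ((c : ℝ) - 1) * b 0) * pt j n t +
          (c : ℝ) * b 0 * pt j (n + 1) t) (Set.Ici 0) t) :
    (∀ j n : ℕ, pCat β pt j n 0 = if j = n then (1 : ℝ) else 0) ∧
    (∀ j : ℕ, ∀ t : ℝ, 0 ≤ t → (∑' n : ℕ, pCat β pt j n t) = 1) ∧
    (∀ j : ℕ, ∀ t : ℝ, 0 ≤ t →
      HasDerivWithinAt (pCat β pt j 0)
        (-((∑' j' : ℕ, hh (j' + 1)) + β) * pCat β pt j 0 t +
          b 0 * pCat β pt j 1 t + β) (Set.Ici 0) t) ∧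
    (∀ j n : ℕ, ∀ t : ℝ, 1 ≤ n → n ≤ c - 1 → 0 ≤ t →
      HasDerivWithinAt (pCat β pt j n)
        (hh n * pCat β pt j 0 t +
          (∑ k ∈ Finset.Icc 1 (n - 1), b (n - k + 1) * pCat β pt j k t) +
          (b 1 - ((n : ℝ) - 1) * b 0 - β) * pCat β pt j n t +
          ((n : ℝ) + 1) * b 0 * pCat β pt j (n + 1) t) (Set.Ici 0) t) ∧
    (∀ j n : ℕ, ∀ t : ℝ, c ≤ n → 0 ≤ t →
      HasDerivWithinAt (pCat β pt j n)
        (hh n * pCat β pt j 0 t +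
          (∑ k ∈ Finset.Icc 1 (n - 1), b (n - k + 1) * pCat β pt j k t) +
          (b 1 - ((c : ℝ) - 1) * b 0 - β) * pCat β pt j n t +
          (c : ℝ) * b 0 * pCat β pt j (n + 1) t) (Set.Ici 0) t) := by
  have hptHasSum : ∀ j t, 0 ≤ t → HasSum (fun n => pt j n t) 1 := fun j t ht => by
    have hsummable : Summable fun n => pt j n t := by
      by_contra h
      simpa [tsum_eq_zero_of_not_summable h] using hptsum j t ht
    simpa [hptsum j t ht] using hsummable.hasSum
  have hpt0_of_pos : ∀ n, 1 ≤ n → pt 0 n 0 = 0 := fun n hn => by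
    rw [hpt0, if_neg (by omega)]
  refine ⟨fun j n => by rw [pCat_zero, hpt0], fun j t ht =>
    (hasSum_pCat hptnn hptcont hptHasSum j ht).tsum_eq, fun j t ht => ?_,
    fun j n t hn hnc ht => ?_, fun j n t hcn ht => ?_⟩
  · simpa [hpt0] using hasDerivWithinAt_pCat_zero hptcont _ _ hpt'0 j ht
  · simpa [hpt0_of_pos n hn] using
      hasDerivWithinAt_pCat_of_pos hptcont hn b _ _ _ (hpt'mid · n · hn hnc) j ht
  · simpa [hpt0_of_pos n (hc.trans hcn)] using
      hasDerivWithinAt_pCat_of_pos hptcont (hc.trans hcn) b _ _ _ (hpt'tail · n · hcn) j ht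

theorem stmt18 (c : ℕ) (hc : 1 ≤ c) (b : ℕ → ℝ)
    (hbnn : ∀ j : ℕ, j ≠ 1 → 0 ≤ b j) (hb0 : 0 < b 0)
    (hbsum : Summable b) (hbzero : (∑' j : ℕ, b j) = 0)
    (hb2 : 0 < ∑' j : ℕ, b (j + 2))
    (hh : ℕ → ℝ) (hhnn : ∀ j : ℕ, 0 ≤ hh (j + 1))
    (hhsum : Summable (fun j : ℕ => hh (j + 1)))
    (hhpos : 0 < ∑' j : ℕ, hh (j + 1))
    (β : ℝ) (hβ : 0 < β)
    (pt : ℕ → ℕ → ℝ → ℝ)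
    (hptnn : ∀ j n : ℕ, ∀ t : ℝ, 0 ≤ t → 0 ≤ pt j n t)
    (hptcont : ∀ j n : ℕ, ContinuousOn (pt j n) (Set.Ici 0))
    (hpt0 : ∀ j n : ℕ, pt j n 0 = if j = n then (1 : ℝ) else 0)
    (hptsum : ∀ j : ℕ, ∀ t : ℝ, 0 ≤ t → (∑' n : ℕ, pt j n t) = 1)
    (hpt'0 : ∀ j : ℕ, ∀ t : ℝ, 0 ≤ t →
      HasDerivWithinAt (pt j 0)
        (-(∑' j' : ℕ, hh (j' + 1)) * pt j 0 t + b 0 * pt j 1 t) (Set.Ici 0) t)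
    (hpt'mid : ∀ j n : ℕ, ∀ t : ℝ, 1 ≤ n → n ≤ c - 1 → 0 ≤ t →
      HasDerivWithinAt (pt j n)
        (hh n * pt j 0 t + (∑ k ∈ Finset.Icc 1 (n - 1), b (n - k + 1) * pt j k t) +
          (b 1 - ((n : ℝ) - 1) * b 0) * pt j n t +
          ((n : ℝ) + 1) * b 0 * pt j (n + 1) t) (Set.Ici 0) t)
    (hpt'tail : ∀ j n : ℕ, ∀ t : ℝ, c ≤ n → 0 ≤ t →
      HasDerivWithinAt (pt j n)
        (hh n * pt j 0 t + (∑ k ∈ Finset.Icc 1 (n - 1), b (n - k + 1) * pt j k t) +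
          (b 1 - ((c : ℝ) - 1) * b 0) * pt j n t +
          (c : ℝ) * b 0 * pt j (n + 1) t) (Set.Ici 0) t) :
    (∀ j n : ℕ, pCat β pt j n 0 = if j = n then (1 : ℝ) else 0) ∧
    (∀ j : ℕ, ∀ t : ℝ, 0 ≤ t → (∑' n : ℕ, pCat β pt j n t) = 1) ∧
    (∀ j : ℕ, ∀ t : ℝ, 0 ≤ t →
      HasDerivWithinAt (pCat β pt j 0)
        (-((∑' j' : ℕ, hh (j' + 1)) + β) * pCat β pt j 0 t +
          b 0 * pCat β pt j 1 t + β) (Set.Ici 0) t) ∧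
    (∀ j n : ℕ, ∀ t : ℝ, 1 ≤ n → n ≤ c - 1 → 0 ≤ t →
      HasDerivWithinAt (pCat β pt j n)
        (hh n * pCat β pt j 0 t +
          (∑ k ∈ Finset.Icc 1 (n - 1), b (n - k + 1) * pCat β pt j k t) +
          (b 1 - ((n : ℝ) - 1) * b 0 - β) * pCat β pt j n t +
          ((n : ℝ) + 1) * b 0 * pCat β pt j (n + 1) t) (Set.Ici 0) t) ∧
    (∀ j n : ℕ, ∀ t : ℝ, c ≤ n → 0 ≤ t →
      HasDerivWithinAt (pCat β pt j n)
        (hh n * pCat β pt j 0 t +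
          (∑ k ∈ Finset.Icc 1 (n - 1), b (n - k + 1) * pCat β pt j k t) +
          (b 1 - ((c : ℝ) - 1) * b 0 - β) * pCat β pt j n t +
          (c : ℝ) * b 0 * pCat β pt j (n + 1) t) (Set.Ici 0) t) :=
  stmt18_general c hc b hh β pt hptnn hptcont hpt0 hptsum hpt'0 hpt'mid hpt'tail
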